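/- arXiv:2110.04870 — 2 statements merged into one kernel-verified Lean document; each statement's English description precedes it below -/
import Mathlib

section
/- (Lemma 4 of the paper: realism uncertainty relation.) Let X and Y be two families of Hermitian mutually orthogonal projectors on Fin dA, each summing to the identity, with associated pinchings Φ_X and Φ_Y on (Fin dA × Fin dB). For every density matrix ρ on (Fin dA × Fin dB): S(Φ_X(ρ)) + S(Φ_Y(ρ)) ≥ 2 · S(ρ), with equality if and only if Φ_X(ρ) = ρ and Φ_Y(ρ) = ρ. Equivalently, ℜ_X(ρ) + ℜ_Y(ρ) ≤ 2 · Real.log dA, where ℜ_X(ρ) = Real.log dA − (S(Φ_X(ρ)) − S(ρ)). -/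
/-!
Write `ρ = U Λ U†` and `Φ(ρ) = V M V†` in eigenbases and regard the pinching as the channel with
Kraus operators `Kᵢ = Xᵢ ⊗ 1`. Since `∑ Kᵢ Kᵢ† = ∑ Kᵢ† Kᵢ = 1`, the matrix
`D l k = ∑ᵢ |(V† Kᵢ U) l k|²` is doubly stochastic, and `M = D Λ`. Jensen's inequality for the
concave function `x ↦ -x log x` on each row of `D`, summed using the column sums, gives
`S(ρ) ≤ S(Φ(ρ))`. In the equality case strict concavity forces `Λ k = M l` whenever `D l k ≠ 0`,
so `Λ` intertwines `(V† Kᵢ U)†` with `M`; this says `ρ Kᵢ† = Kᵢ† Φ(ρ)`, and summing over `i`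
gives `ρ = Φ(ρ)`.
-/

open Matrix Kronecker BigOperators Finset Real
open scoped ComplexOrder

noncomputable def pinch {dA dB : ℕ} {ι : Type*} [Fintype ι]
    (X : ι → Matrix (Fin dA) (Fin dA) ℂ)
    (ρ : Matrix (Fin dA × Fin dB) (Fin dA × Fin dB) ℂ) :
    Matrix (Fin dA × Fin dB) (Fin dA × Fin dB) ℂ :=
  ∑ i, ((X i) ⊗ₖ (1 : Matrix (Fin dB) (Fin dB) ℂ)) * ρ *
    ((X i) ⊗ₖ (1 : Matrix (Fin dB) (Fin dB) ℂ))

noncomputable def vnEntropy {n : Type*} [Fintype n] [DecidableEq n]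
    {ρ : Matrix n n ℂ} (hρ : ρ.IsHermitian) : ℝ :=
  ∑ k, Real.negMulLog (hρ.eigenvalues k)

section DoublyStochastic

variable {n : Type*} [Fintype n] [DecidableEq n] {D : Matrix n n ℝ} {p : n → ℝ}

theorem sum_mul_negMulLog_le_negMulLog_mulVec (hD : D ∈ doublyStochastic ℝ n) (hp : 0 ≤ p)
    (l : n) : ∑ k, D l k * negMulLog (p k) ≤ negMulLog ((D *ᵥ p) l) := by
  simpa [mulVec, dotProduct] using
    concaveOn_negMulLog.le_map_sum (t := univ) (w := D l) (p := p)
      (fun _ _ => nonneg_of_mem_doublyStochastic hD) (sum_row_of_mem_doublyStochastic hD l)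
      (fun k _ => hp k)

theorem sum_negMulLog_le_sum_negMulLog_mulVec (hD : D ∈ doublyStochastic ℝ n) (hp : 0 ≤ p) :
    ∑ k, negMulLog (p k) ≤ ∑ l, negMulLog ((D *ᵥ p) l) :=
  calc ∑ k, negMulLog (p k) = ∑ l, (D *ᵥ (negMulLog ∘ p)) l :=
        (sum_mulVec_of_mem_doublyStochastic hD).symm
    _ ≤ _ := sum_le_sum fun l _ => sum_mul_negMulLog_le_negMulLog_mulVec hD hp l

theorem eq_mulVec_apply_of_sum_negMulLog_eq (hD : D ∈ doublyStochastic ℝ n) (hp : 0 ≤ p)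
    (h : ∑ l, negMulLog ((D *ᵥ p) l) = ∑ k, negMulLog (p k)) {l k : n} (hlk : D l k ≠ 0) :
    p k = (D *ᵥ p) l := by
  have hsum : ∑ l, ∑ j, D l j * negMulLog (p j) = ∑ l, negMulLog ((D *ᵥ p) l) :=
    h ▸ sum_mulVec_of_mem_doublyStochastic hD
  have hrow : negMulLog (∑ j, D l j • p j) = ∑ j, D l j • negMulLog (p j) :=
    ((sum_eq_sum_iff_of_le fun l _ => sum_mul_negMulLog_le_negMulLog_mulVec hD hp l).mp
      hsum l (mem_univ l)).symm
  exact (strictConcaveOn_negMulLog.map_sum_eq_iff' (fun _ _ => nonneg_of_mem_doublyStochastic hD)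
    (sum_row_of_mem_doublyStochastic hD l) (fun j _ => hp j)).mp hrow k (mem_univ k) hlk

end DoublyStochastic

section KrausTransition

variable {n ι : Type*} [Fintype n] [Fintype ι] {W : ι → Matrix n n ℂ}

def krausTransition (W : ι → Matrix n n ℂ) : Matrix n n ℝ :=
  fun l k => ∑ i, Complex.normSq (W i l k)

theorem sum_mul_diagonal_mul_conjTranspose_apply_self [DecidableEq n] (W : ι → Matrix n n ℂ)
    (p : n → ℝ) (l : n) :
    (∑ i, W i * diagonal (RCLike.ofReal ∘ p) * (W i)ᴴ : Matrix n n ℂ) l l =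
      ((krausTransition W *ᵥ p) l : ℂ) := by
  simp only [Matrix.sum_apply, mul_apply, diagonal_apply, mul_ite, mul_zero,
    sum_ite_eq', mem_univ, if_true, conjTranspose_apply, krausTransition, mulVec, dotProduct,
    sum_mul]
  push_cast
  rw [sum_comm]
  refine sum_congr rfl fun k _ => sum_congr rfl fun i _ => ?_
  rw [← Complex.mul_conj]
  simp only [Function.comp_apply, RCLike.ofReal_eq_complex_ofReal, RCLike.star_def]
  ring

theorem sum_mul_conjTranspose_apply_self (W : ι → Matrix n n ℂ) (l : n) :
    (∑ i, W i * (W i)ᴴ : Matrix n n ℂ) l l = ((∑ k, krausTransition W l k : ℝ) : ℂ) := by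
  simp only [Matrix.sum_apply, mul_apply, conjTranspose_apply, krausTransition]
  push_cast
  rw [sum_comm]
  refine sum_congr rfl fun k _ => sum_congr rfl fun i _ => ?_
  rw [← Complex.mul_conj]
  rfl

theorem sum_conjTranspose_mul_apply_self (W : ι → Matrix n n ℂ) (k : n) :
    (∑ i, (W i)ᴴ * W i : Matrix n n ℂ) k k = ((∑ l, krausTransition W l k : ℝ) : ℂ) := by
  simp only [Matrix.sum_apply, mul_apply, conjTranspose_apply, krausTransition]
  push_cast
  rw [sum_comm]
  refine sum_congr rfl fun l _ => sum_congr rfl fun i _ => ?_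
  rw [Complex.normSq_eq_conj_mul_self]
  rfl

theorem krausTransition_mem_doublyStochastic [DecidableEq n] (h₁ : ∑ i, W i * (W i)ᴴ = 1)
    (h₂ : ∑ i, (W i)ᴴ * W i = 1) : krausTransition W ∈ doublyStochastic ℝ n := by
  refine (mem_doublyStochastic_iff_sum).2
    ⟨fun l k => sum_nonneg fun i _ => Complex.normSq_nonneg _, fun l => ?_, fun k => ?_⟩
  · have h := sum_mul_conjTranspose_apply_self W l
    rw [h₁, one_apply_eq] at h
    exact_mod_cast h.symm
  · have h := sum_conjTranspose_mul_apply_self W k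
    rw [h₂, one_apply_eq] at h
    exact_mod_cast h.symm

theorem diagonal_mul_conjTranspose_eq [DecidableEq n] {p q : n → ℝ}
    (h : ∀ l k, krausTransition W l k ≠ 0 → p k = q l) (i : ι) :
    diagonal (RCLike.ofReal ∘ p) * (W i)ᴴ = (W i)ᴴ * diagonal (RCLike.ofReal ∘ q) := by
  ext k l
  rw [diagonal_mul, mul_diagonal, conjTranspose_apply]
  by_cases hW : W i l k = 0
  · simp [hW]
  · have hpos : 0 < krausTransition W l k :=
      (Complex.normSq_pos.2 hW).trans_le <|
        single_le_sum (f := fun j => Complex.normSq (W j l k))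
          (fun j _ => Complex.normSq_nonneg _) (mem_univ i)
    simp [h l k hpos.ne', mul_comm]

end KrausTransition

section UnitaryConjugation

variable {n ι : Type*} [Fintype n] [DecidableEq n] [Fintype ι] {K : ι → Matrix n n ℂ}
  {U V ρ σ : Matrix n n ℂ} {p q : n → ℝ}

theorem sum_conj_mul_conjTranspose {A B : Matrix n n ℂ} (hB : B * Bᴴ = 1) :
    ∑ i, (A * K i * B) * (A * K i * B)ᴴ = A * (∑ i, K i * (K i)ᴴ) * Aᴴ := by
  have h : ∀ i, (A * K i * B) * (A * K i * B)ᴴ = A * (K i * (K i)ᴴ) * Aᴴ := fun i => by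
    simp only [conjTranspose_mul, Matrix.mul_assoc]
    rw [← Matrix.mul_assoc B, hB, Matrix.one_mul]
  simp only [h, Matrix.mul_sum, Matrix.sum_mul]

theorem sum_conjTranspose_mul_conj {A B : Matrix n n ℂ} (hA : Aᴴ * A = 1) :
    ∑ i, (A * K i * B)ᴴ * (A * K i * B) = Bᴴ * (∑ i, (K i)ᴴ * K i) * B := by
  have h : ∀ i, (A * K i * B)ᴴ * (A * K i * B) = Bᴴ * ((K i)ᴴ * K i) * B := fun i => by
    simp only [conjTranspose_mul, Matrix.mul_assoc]
    rw [← Matrix.mul_assoc Aᴴ, hA, Matrix.one_mul]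
  simp only [h, Matrix.mul_sum, Matrix.sum_mul]

theorem krausTransition_conj_mem_doublyStochastic (hU : U ∈ unitaryGroup n ℂ)
    (hV : V ∈ unitaryGroup n ℂ) (h₁ : ∑ i, K i * (K i)ᴴ = 1) (h₂ : ∑ i, (K i)ᴴ * K i = 1) :
    krausTransition (fun i => Vᴴ * K i * U) ∈ doublyStochastic ℝ n := by
  refine krausTransition_mem_doublyStochastic ?_ ?_
  · rw [sum_conj_mul_conjTranspose (mem_unitaryGroup_iff.mp hU), h₁, Matrix.mul_one,
      conjTranspose_conjTranspose]
    exact mem_unitaryGroup_iff'.mp hV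
  · have hV' : Vᴴᴴ * Vᴴ = 1 := by
      rw [conjTranspose_conjTranspose]; exact mem_unitaryGroup_iff.mp hV
    rw [sum_conjTranspose_mul_conj hV', h₂, Matrix.mul_one]
    exact mem_unitaryGroup_iff'.mp hU

theorem eq_krausTransition_conj_mulVec (hV : V ∈ unitaryGroup n ℂ)
    (hρ : ρ = U * diagonal (RCLike.ofReal ∘ p) * Uᴴ)
    (hσ : σ = V * diagonal (RCLike.ofReal ∘ q) * Vᴴ) (hK : σ = ∑ i, K i * ρ * (K i)ᴴ) :
    q = krausTransition (fun i => Vᴴ * K i * U) *ᵥ p := by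
  have hdiag : diagonal (RCLike.ofReal ∘ q) =
      ∑ i, (Vᴴ * K i * U) * diagonal (RCLike.ofReal ∘ p) * (Vᴴ * K i * U)ᴴ :=
    calc diagonal (RCLike.ofReal ∘ q) = Vᴴ * σ * V := by
          have hV₁ : Vᴴ * V = 1 := mem_unitaryGroup_iff'.mp hV
          rw [hσ, ← Matrix.mul_assoc, ← Matrix.mul_assoc, hV₁, Matrix.one_mul, Matrix.mul_assoc,
            hV₁, Matrix.mul_one]
      _ = _ := by
          simp only [hK, hρ, Matrix.mul_sum, Matrix.sum_mul, conjTranspose_mul,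
            conjTranspose_conjTranspose, Matrix.mul_assoc]
  funext l
  have h := congr_fun (congr_fun hdiag l) l
  rw [diagonal_apply_eq, sum_mul_diagonal_mul_conjTranspose_apply_self, Function.comp_apply,
    RCLike.ofReal_eq_complex_ofReal] at h
  exact_mod_cast h

theorem mul_conjTranspose_eq_of_krausTransition_conj (hU : U ∈ unitaryGroup n ℂ)
    (hV : V ∈ unitaryGroup n ℂ) (hρ : ρ = U * diagonal (RCLike.ofReal ∘ p) * Uᴴ)
    (hσ : σ = V * diagonal (RCLike.ofReal ∘ q) * Vᴴ)
    (h : ∀ l k, krausTransition (fun i => Vᴴ * K i * U) l k ≠ 0 → p k = q l) (i : ι) :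
    ρ * (K i)ᴴ = (K i)ᴴ * σ := by
  have hU₁ : U * Uᴴ = 1 := mem_unitaryGroup_iff.mp hU
  have hV₁ : V * Vᴴ = 1 := mem_unitaryGroup_iff.mp hV
  have hcomm := diagonal_mul_conjTranspose_eq h i
  simp only [conjTranspose_mul, conjTranspose_conjTranspose] at hcomm
  calc ρ * (K i)ᴴ = U * (diagonal (RCLike.ofReal ∘ p) * (Uᴴ * ((K i)ᴴ * V))) * Vᴴ := by
        simp only [hρ, Matrix.mul_assoc, hV₁, Matrix.mul_one]
    _ = U * (Uᴴ * ((K i)ᴴ * V) * diagonal (RCLike.ofReal ∘ q)) * Vᴴ := by rw [hcomm]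
    _ = (K i)ᴴ * σ := by
        simp only [hσ, ← Matrix.mul_assoc, hU₁, Matrix.one_mul]

end UnitaryConjugation

section Entropy

variable {n ι : Type*} [Fintype n] [DecidableEq n] [Fintype ι] {K : ι → Matrix n n ℂ}
  {ρ σ : Matrix n n ℂ}

theorem _root_.Matrix.IsHermitian.eq_eigenvectorUnitary_mul_diagonal_mul (hρ : ρ.IsHermitian) :
    ρ = (hρ.eigenvectorUnitary : Matrix n n ℂ) * diagonal (RCLike.ofReal ∘ hρ.eigenvalues) *
      (hρ.eigenvectorUnitary : Matrix n n ℂ)ᴴ :=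
  hρ.spectral_theorem

theorem vnEntropy_congr (h : ρ = σ) (hρ : ρ.IsHermitian) (hσ : σ.IsHermitian) :
    vnEntropy hρ = vnEntropy hσ := by
  subst h; rfl

theorem vnEntropy_le_of_eq_sum_kraus (h₁ : ∑ i, K i * (K i)ᴴ = 1)
    (h₂ : ∑ i, (K i)ᴴ * K i = 1) (hρ : ρ.PosSemidef) (hσ : σ.IsHermitian)
    (hK : σ = ∑ i, K i * ρ * (K i)ᴴ) :
    vnEntropy hρ.isHermitian ≤ vnEntropy hσ := by
  have hspec := eq_krausTransition_conj_mulVec hσ.eigenvectorUnitary.2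
    hρ.isHermitian.eq_eigenvectorUnitary_mul_diagonal_mul
    hσ.eq_eigenvectorUnitary_mul_diagonal_mul hK
  unfold vnEntropy
  rw [hspec]
  exact sum_negMulLog_le_sum_negMulLog_mulVec (krausTransition_conj_mem_doublyStochastic
    hρ.isHermitian.eigenvectorUnitary.2 hσ.eigenvectorUnitary.2 h₁ h₂) hρ.eigenvalues_nonneg

theorem mul_conjTranspose_eq_of_vnEntropy_eq (h₁ : ∑ i, K i * (K i)ᴴ = 1)
    (h₂ : ∑ i, (K i)ᴴ * K i = 1) (hρ : ρ.PosSemidef) (hσ : σ.IsHermitian)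
    (hK : σ = ∑ i, K i * ρ * (K i)ᴴ) (hS : vnEntropy hσ = vnEntropy hρ.isHermitian) (i : ι) :
    ρ * (K i)ᴴ = (K i)ᴴ * σ := by
  have hspec := eq_krausTransition_conj_mulVec hσ.eigenvectorUnitary.2
    hρ.isHermitian.eq_eigenvectorUnitary_mul_diagonal_mul
    hσ.eq_eigenvectorUnitary_mul_diagonal_mul hK
  have hD := krausTransition_conj_mem_doublyStochastic
    hρ.isHermitian.eigenvectorUnitary.2 hσ.eigenvectorUnitary.2 h₁ h₂
  refine mul_conjTranspose_eq_of_krausTransition_conj hρ.isHermitian.eigenvectorUnitary.2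
    hσ.eigenvectorUnitary.2 hρ.isHermitian.eq_eigenvectorUnitary_mul_diagonal_mul
    hσ.eq_eigenvectorUnitary_mul_diagonal_mul (fun l k hlk => ?_) i
  rw [hspec]
  exact eq_mulVec_apply_of_sum_negMulLog_eq hD hρ.eigenvalues_nonneg
    (by simpa only [vnEntropy, hspec] using hS) hlk

theorem eq_of_vnEntropy_eq (h₁ : ∑ i, K i * (K i)ᴴ = 1) (h₂ : ∑ i, (K i)ᴴ * K i = 1)
    (h₃ : ∑ i, (K i)ᴴ = 1) (hρ : ρ.PosSemidef) (hσ : σ.IsHermitian)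
    (hK : σ = ∑ i, K i * ρ * (K i)ᴴ) (hS : vnEntropy hσ = vnEntropy hρ.isHermitian) : σ = ρ :=
  calc σ = ∑ i, (K i)ᴴ * σ := by rw [← Matrix.sum_mul, h₃, Matrix.one_mul]
    _ = ∑ i, ρ * (K i)ᴴ := by simp only [mul_conjTranspose_eq_of_vnEntropy_eq h₁ h₂ hρ hσ hK hS]
    _ = ρ := by rw [← Matrix.mul_sum, h₃, Matrix.mul_one]

end Entropy

section Pinching

variable {dA dB : ℕ} {ι : Type*} [Fintype ι] {X : ι → Matrix (Fin dA) (Fin dA) ℂ}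
  {ρ : Matrix (Fin dA × Fin dB) (Fin dA × Fin dB) ℂ}

theorem sum_kronecker_one {m n : Type*} [DecidableEq n] (A : ι → Matrix m m ℂ) :
    ∑ i, A i ⊗ₖ (1 : Matrix n n ℂ) = (∑ i, A i) ⊗ₖ (1 : Matrix n n ℂ) :=
  (map_sum ((kroneckerBilinear (R := ℂ)).flip (1 : Matrix n n ℂ)) A univ).symm

theorem kronecker_one_conjTranspose {m n : Type*} [DecidableEq n] {A : Matrix m m ℂ}
    (hA : Aᴴ = A) : (A ⊗ₖ (1 : Matrix n n ℂ))ᴴ = A ⊗ₖ 1 := by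
  rw [conjTranspose_kronecker, hA, conjTranspose_one]

theorem pinch_eq_sum_kraus (hXherm : ∀ i, (X i)ᴴ = X i) :
    pinch X ρ = ∑ i, (X i ⊗ₖ (1 : Matrix (Fin dB) (Fin dB) ℂ)) * ρ * (X i ⊗ₖ 1)ᴴ := by
  simp only [kronecker_one_conjTranspose (hXherm _)]
  rfl

theorem sum_kronecker_one_mul_self (hXidem : ∀ i, X i * X i = X i) (hXsum : ∑ i, X i = 1) :
    ∑ i, (X i ⊗ₖ (1 : Matrix (Fin dB) (Fin dB) ℂ)) * (X i ⊗ₖ 1) = 1 := by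
  simp only [← mul_kronecker_mul, hXidem, Matrix.one_mul, sum_kronecker_one, hXsum,
    one_kronecker_one]

theorem vnEntropy_le_vnEntropy_pinch (hXidem : ∀ i, X i * X i = X i)
    (hXherm : ∀ i, (X i)ᴴ = X i) (hXsum : ∑ i, X i = 1) (hρ : ρ.PosSemidef)
    (hΦ : (pinch X ρ).IsHermitian) : vnEntropy hρ.isHermitian ≤ vnEntropy hΦ := by
  have hK := sum_kronecker_one_mul_self (dB := dB) hXidem hXsum
  refine vnEntropy_le_of_eq_sum_kraus ?_ ?_ hρ hΦ (pinch_eq_sum_kraus hXherm) <;>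
    simpa only [kronecker_one_conjTranspose (hXherm _)] using hK

theorem vnEntropy_pinch_eq_iff (hXidem : ∀ i, X i * X i = X i)
    (hXherm : ∀ i, (X i)ᴴ = X i) (hXsum : ∑ i, X i = 1) (hρ : ρ.PosSemidef)
    (hΦ : (pinch X ρ).IsHermitian) : vnEntropy hΦ = vnEntropy hρ.isHermitian ↔ pinch X ρ = ρ := by
  have hK := sum_kronecker_one_mul_self (dB := dB) hXidem hXsum
  refine ⟨eq_of_vnEntropy_eq ?_ ?_ ?_ hρ hΦ (pinch_eq_sum_kraus hXherm),
    fun h => vnEntropy_congr h hΦ hρ.isHermitian⟩ <;>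
    simp only [kronecker_one_conjTranspose (hXherm _), hK, sum_kronecker_one, hXsum,
      one_kronecker_one]

end Pinching

theorem realism_uncertainty_general {dA dB : ℕ} {ι κ : Type*} [Fintype ι] [DecidableEq ι]
    [Fintype κ] [DecidableEq κ]
    (X : ι → Matrix (Fin dA) (Fin dA) ℂ)
    (hXproj : ∀ i j, X i * X j = if i = j then X i else 0)
    (hXherm : ∀ i, (X i)ᴴ = X i)
    (hXsum : ∑ i, X i = 1)
    (Y : κ → Matrix (Fin dA) (Fin dA) ℂ)
    (hYproj : ∀ i j, Y i * Y j = if i = j then Y i else 0)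
    (hYherm : ∀ i, (Y i)ᴴ = Y i)
    (hYsum : ∑ i, Y i = 1)
    (ρ : Matrix (Fin dA × Fin dB) (Fin dA × Fin dB) ℂ)
    (hρ : ρ.PosSemidef)
    (hΦX : (pinch X ρ).IsHermitian) (hΦY : (pinch Y ρ).IsHermitian) :
    (2 * vnEntropy hρ.isHermitian ≤ vnEntropy hΦX + vnEntropy hΦY ∧
      (vnEntropy hΦX + vnEntropy hΦY = 2 * vnEntropy hρ.isHermitian ↔
        pinch X ρ = ρ ∧ pinch Y ρ = ρ)) ∧
    (Real.log dA - (vnEntropy hΦX - vnEntropy hρ.isHermitian))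
      + (Real.log dA - (vnEntropy hΦY - vnEntropy hρ.isHermitian))
      ≤ 2 * Real.log dA := by
  have hXidem : ∀ i, X i * X i = X i := fun i => by simpa using hXproj i i
  have hYidem : ∀ i, Y i * Y i = Y i := fun i => by simpa using hYproj i i
  have hX := vnEntropy_le_vnEntropy_pinch hXidem hXherm hXsum hρ hΦX
  have hY := vnEntropy_le_vnEntropy_pinch hYidem hYherm hYsum hρ hΦY
  have hXeq := vnEntropy_pinch_eq_iff hXidem hXherm hXsum hρ hΦX
  have hYeq := vnEntropy_pinch_eq_iff hYidem hYherm hYsum hρ hΦY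
  refine ⟨⟨by linarith, fun h => ⟨hXeq.1 (by linarith), hYeq.1 (by linarith)⟩, ?_⟩, by linarith⟩
  rintro ⟨hXfix, hYfix⟩
  linarith [hXeq.2 hXfix, hYeq.2 hYfix]

/-- Lemma 4 of the paper (realism uncertainty relation):
`S(Φ_X(ρ)) + S(Φ_Y(ρ)) ≥ 2 S(ρ)`, with equality iff `Φ_X(ρ) = ρ` and `Φ_Y(ρ) = ρ`;
equivalently `ℜ_X(ρ) + ℜ_Y(ρ) ≤ 2 log dA`. -/
theorem realism_uncertainty {dA dB : ℕ} {ι κ : Type*} [Fintype ι] [DecidableEq ι]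
    [Fintype κ] [DecidableEq κ]
    (X : ι → Matrix (Fin dA) (Fin dA) ℂ)
    (hXproj : ∀ i j, X i * X j = if i = j then X i else 0)
    (hXherm : ∀ i, (X i)ᴴ = X i)
    (hXsum : ∑ i, X i = 1)
    (Y : κ → Matrix (Fin dA) (Fin dA) ℂ)
    (hYproj : ∀ i j, Y i * Y j = if i = j then Y i else 0)
    (hYherm : ∀ i, (Y i)ᴴ = Y i)
    (hYsum : ∑ i, Y i = 1)
    (ρ : Matrix (Fin dA × Fin dB) (Fin dA × Fin dB) ℂ)
    (hρ : ρ.PosSemidef) (htr : ρ.trace = 1)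
    (hΦX : (pinch X ρ).IsHermitian) (hΦY : (pinch Y ρ).IsHermitian) :
    (2 * vnEntropy hρ.isHermitian ≤ vnEntropy hΦX + vnEntropy hΦY ∧
      (vnEntropy hΦX + vnEntropy hΦY = 2 * vnEntropy hρ.isHermitian ↔
        pinch X ρ = ρ ∧ pinch Y ρ = ρ)) ∧
    (Real.log dA - (vnEntropy hΦX - vnEntropy hρ.isHermitian))
      + (Real.log dA - (vnEntropy hΦY - vnEntropy hρ.isHermitian))
      ≤ 2 * Real.log dA :=
  realism_uncertainty_general X hXproj hXherm hXsum Y hYproj hYherm hYsum ρ hρ hΦX hΦY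
end

section
/- (Successive pinchings in mutually unbiased bases produce the maximally mixed local state.) Let a, b : Fin dA → (Fin dA → ℂ) be two orthonormal bases of ℂ^dA satisfying the unbiasedness condition ‖star (a i) ⬝ᵥ (b j)‖² = 1/dA for all i, j. Let Φ_A and Φ_{A'} be the pinchings on (Fin dA × Fin dB) by the rank-one projectors (vecMulVec (a i) (star (a i))) ⊗ₖ 1 and (vecMulVec (b j) (star (b j))) ⊗ₖ 1, respectively. Then for every matrix ρ on (Fin dA × Fin dB): Φ_{A'}(Φ_A(ρ)) = ((1/dA : ℂ) • 1) ⊗ₖ Tr_A(ρ). -/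
open Matrix Kronecker BigOperators

/-- Partial trace over the first factor. -/
noncomputable def trA {dA dB : ℕ}
    (M : Matrix (Fin dA × Fin dB) (Fin dA × Fin dB) ℂ) :
    Matrix (Fin dB) (Fin dB) ℂ :=
  fun j j' => ∑ i, M (i, j) (i, j')

/-
Write `P i = |a i⟩⟨a i|` and `Q j = |b j⟩⟨b j|`. Each term of the double pinching is
`(Q j P i ⊗ 1) ρ (P i Q j ⊗ 1) = |⟨a i, b j⟩|² (|b j⟩⟨a i| ⊗ 1) ρ (|a i⟩⟨b j| ⊗ 1)`, and
unbiasedness makes every coefficient `1 / dA`. Summing over `i`, completeness of the basis `a`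
collapses the sandwiches to `|b j⟩⟨b j| ⊗ Tr_A ρ`; summing over `j`, completeness of `b` gives
`1 ⊗ Tr_A ρ`.
-/

theorem Matrix.sum_kronecker {ι l m n p R : Type*} [NonUnitalNonAssocSemiring R] (s : Finset ι)
    (A : ι → Matrix l m R) (B : Matrix n p R) :
    (∑ i ∈ s, A i) ⊗ₖ B = ∑ i ∈ s, A i ⊗ₖ B := by
  ext; simp [Matrix.sum_apply, Finset.sum_mul]

theorem sum_vecMulVec_star_self_eq_one {n R : Type*} [Fintype n] [DecidableEq n] [CommRing R]
    [StarRing R] {a : n → n → R}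
    (ha : ∀ i j, star (a i) ⬝ᵥ a j = if i = j then 1 else 0) :
    ∑ i, vecMulVec (a i) (star (a i)) = 1 := by
  have hA : (Matrix.of a).map star * (Matrix.of a)ᵀ = 1 := by
    ext i j
    simpa [Matrix.mul_apply, dotProduct, Matrix.one_apply] using ha i j
  have hA' : (Matrix.of a)ᵀ * (Matrix.of a).map star = 1 := mul_eq_one_comm.mp hA
  ext p p'
  simpa [Matrix.mul_apply, Matrix.sum_apply, vecMulVec_apply, Matrix.one_apply] using
    congrFun (congrFun hA' p) p'

theorem vecMulVec_kronecker_one_mul_mul_apply {m l R : Type*} [Fintype m] [Fintype l]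
    [DecidableEq l] [CommSemiring R] (u w x v : m → R) (ρ : Matrix (m × l) (m × l) R)
    (p p' : m) (q q' : l) :
    ((vecMulVec u w ⊗ₖ (1 : Matrix l l R)) * ρ * (vecMulVec x v ⊗ₖ (1 : Matrix l l R)) :
        Matrix (m × l) (m × l) R) (p, q) (p', q')
      = u p * v p' * ∑ r, ∑ r', w r * ρ (r, q) (r', q') * x r' := by
  simp only [Matrix.mul_apply, kroneckerMap_apply, vecMulVec_apply, Matrix.one_apply,
    Fintype.sum_prod_type, mul_ite, ite_mul, mul_zero, zero_mul, mul_one, Finset.sum_ite_eq,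
    Finset.sum_ite_eq', Finset.mem_univ, if_true, Finset.mul_sum, Finset.sum_mul]
  rw [Finset.sum_comm]
  exact Finset.sum_congr rfl fun r _ => Finset.sum_congr rfl fun r' _ => by ring

theorem sum_vecMulVec_kronecker_one_mul_mul {dA dB : ℕ} {a : Fin dA → Fin dA → ℂ}
    (ha : ∀ i j, star (a i) ⬝ᵥ a j = if i = j then 1 else 0) (u v : Fin dA → ℂ)
    (ρ : Matrix (Fin dA × Fin dB) (Fin dA × Fin dB) ℂ) :
    ∑ i, (vecMulVec u (star (a i)) ⊗ₖ (1 : Matrix (Fin dB) (Fin dB) ℂ)) * ρ *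
        (vecMulVec (a i) (star v) ⊗ₖ (1 : Matrix (Fin dB) (Fin dB) ℂ))
      = vecMulVec u (star v) ⊗ₖ trA ρ := by
  have hcompl (r r' : Fin dA) : ∑ i, star (a i r) * a i r' = if r' = r then 1 else 0 := by
    simpa [Matrix.sum_apply, vecMulVec_apply, Matrix.one_apply, mul_comm] using
      congrFun (congrFun (sum_vecMulVec_star_self_eq_one ha) r') r
  ext ⟨p, q⟩ ⟨p', q'⟩
  simp only [Matrix.sum_apply, vecMulVec_kronecker_one_mul_mul_apply, kroneckerMap_apply,
    vecMulVec_apply, trA, ← Finset.mul_sum]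
  congr 1
  calc ∑ i, ∑ r, ∑ r', star (a i r) * ρ (r, q) (r', q') * a i r'
      = ∑ r, ∑ r', ρ (r, q) (r', q') * ∑ i, star (a i r) * a i r' := by
        simp only [Finset.mul_sum]
        rw [Finset.sum_comm]
        refine Finset.sum_congr rfl fun r _ => ?_
        rw [Finset.sum_comm]
        exact Finset.sum_congr rfl fun r' _ => Finset.sum_congr rfl fun i _ => by ring
    _ = ∑ r, ρ (r, q) (r, q') := by
        simp only [hcompl, mul_ite, mul_one, mul_zero, Finset.sum_ite_eq', Finset.mem_univ,
          if_true]

theorem pinch_pinch {dA dB : ℕ} {ι κ : Type*} [Fintype ι] [Fintype κ]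
    (X : ι → Matrix (Fin dA) (Fin dA) ℂ) (Y : κ → Matrix (Fin dA) (Fin dA) ℂ)
    (ρ : Matrix (Fin dA × Fin dB) (Fin dA × Fin dB) ℂ) :
    pinch Y (pinch X ρ) = ∑ j, ∑ i, ((Y j * X i) ⊗ₖ (1 : Matrix (Fin dB) (Fin dB) ℂ)) * ρ *
        ((X i * Y j) ⊗ₖ (1 : Matrix (Fin dB) (Fin dB) ℂ)) := by
  have hmul (A B : Matrix (Fin dA) (Fin dA) ℂ) :
      (A * B) ⊗ₖ (1 : Matrix (Fin dB) (Fin dB) ℂ) = (A ⊗ₖ 1) * (B ⊗ₖ 1) := by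
    rw [← mul_kronecker_mul, Matrix.one_mul]
  simp only [pinch, hmul, Matrix.mul_sum, Matrix.sum_mul, Matrix.mul_assoc]

/-- Successive pinchings in mutually unbiased bases produce the maximally mixed local
state: `Φ_{A'}(Φ_A(ρ)) = (𝟙/dA) ⊗ₖ Tr_A(ρ)`. -/
theorem mub_pinch_pinch {dA dB : ℕ}
    (a b : Fin dA → (Fin dA → ℂ))
    (ha : ∀ i j, star (a i) ⬝ᵥ a j = if i = j then 1 else 0)
    (hb : ∀ i j, star (b i) ⬝ᵥ b j = if i = j then 1 else 0)
    (hab : ∀ i j, ‖star (a i) ⬝ᵥ b j‖ ^ 2 = 1 / dA)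
    (ρ : Matrix (Fin dA × Fin dB) (Fin dA × Fin dB) ℂ) :
    pinch (fun j => vecMulVec (b j) (star (b j)))
        (pinch (fun i => vecMulVec (a i) (star (a i))) ρ)
      = ((1 / (dA : ℂ)) • (1 : Matrix (Fin dA) (Fin dA) ℂ)) ⊗ₖ trA ρ := by
  have hoverlap (i j : Fin dA) : (star (a i) ⬝ᵥ b j) * (star (b j) ⬝ᵥ a i) = 1 / (dA : ℂ) := by
    rw [mul_comm, star_dotProduct, Complex.star_def, Complex.conj_mul', ← Complex.ofReal_pow,
      hab, Complex.ofReal_div, Complex.ofReal_one, Complex.ofReal_natCast]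
  simp only [pinch_pinch, vecMulVec_mul_vecMulVec, vecMulVec_smul, smul_kronecker,
    smul_mul_assoc, mul_smul_comm, smul_smul, hoverlap, ← Finset.smul_sum,
    sum_vecMulVec_kronecker_one_mul_mul ha, ← Matrix.sum_kronecker,
    sum_vecMulVec_star_self_eq_one hb]
end
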